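/- Let d = 2h with h > 2, and set Π := ∏_{l=0}^{h−1} (l·v + (d−l)·u) in R. Then the ideal of R generated by ∂Π and ∂((u+3v)·Π) equals the ideal of R generated by ∂Π and Π. -/

import Mathlib

noncomputable section

abbrev R2 : Type := MvPolynomial (Fin 2) ℚ

def uu : R2 := MvPolynomial.X 0
def vv : R2 := MvPolynomial.X 1

/-- The involution of `R2 = ℚ[u,v]` swapping `u` and `v`; `P*`. -/
def swapUV (P : R2) : R2 := MvPolynomial.rename (Equiv.swap (0 : Fin 2) 1) P

/-- `Q_k(y) = ∏_{j=0}^{k} (y + j·u + (k−j)·v)` in `R2[y]`. -/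
def Qp (k : ℕ) : Polynomial R2 :=
  ∏ j ∈ Finset.range (k + 1),
    (Polynomial.X + Polynomial.C ((j : R2) * uu + ((k - j : ℕ) : R2) * vv))

/-- `C_{d+1} = ∏_{j=0}^{d} (j·u + (d−j)·v)` in `R2`. -/
def Cdtop (d : ℕ) : R2 :=
  ∏ j ∈ Finset.range (d + 1), ((j : R2) * uu + ((d - j : ℕ) : R2) * vv)

/-- `Q_k(x_i)` as an element of `R2[x_1,…,x_r]`. -/
def Qm (r k : ℕ) (i : Fin r) : MvPolynomial (Fin r) R2 :=
  ∏ j ∈ Finset.range (k + 1),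
    (MvPolynomial.X i + MvPolynomial.C ((j : R2) * uu + ((k - j : ℕ) : R2) * vv))

/-!
Divided differences obey the twisted Leibniz rule `∂(aP) = a*·∂P + ∂a·P`. For `a = u + 3v`
one has `a* = v + 3u` and `∂a = -2`, so `∂((u+3v)Π) = (v+3u)·∂Π - 2Π`; modulo `∂Π` the second
generator is therefore a unit multiple of `Π`.
-/

lemma Ideal.span_pair_mul_left_add_unit_mul {α : Type*} [CommRing α] {c : α} (hc : IsUnit c)
    (x y z : α) : Ideal.span {x, z * x + c * y} = Ideal.span {x, y} := by
  rw [Ideal.span_pair_mul_left_add x (c * y) z, Ideal.span_insert,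
    Ideal.span_singleton_mul_left_unit hc, ← Ideal.span_insert]

lemma uu_sub_vv_ne_zero : uu - vv ≠ 0 :=
  sub_ne_zero.mpr fun h => absurd (MvPolynomial.X_injective h) (by decide : (0 : Fin 2) ≠ 1)

lemma swapUV_mul (a b : R2) : swapUV (a * b) = swapUV a * swapUV b :=
  map_mul _ a b

lemma swapUV_uu_add_three_mul_vv : swapUV (uu + 3 * vv) = vv + 3 * uu := by
  simp [swapUV, uu, vv, map_ofNat]

lemma divDiff_uu_add_three_mul_vv :
    (uu - vv) * (-2) = uu + 3 * vv - swapUV (uu + 3 * vv) := by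
  rw [swapUV_uu_add_three_mul_vv]
  ring

lemma divDiff_mul {a P Da DP D : R2} (ha : (uu - vv) * Da = a - swapUV a)
    (hP : (uu - vv) * DP = P - swapUV P) (h : (uu - vv) * D = a * P - swapUV (a * P)) :
    D = swapUV a * DP + Da * P := by
  apply mul_left_cancel₀ uu_sub_vv_ne_zero
  rw [h, swapUV_mul]
  linear_combination (-swapUV a) * hP - P * ha

lemma MvPolynomial.isUnit_neg_two {σ K : Type*} [Field K] [CharZero K] :
    IsUnit (-2 : MvPolynomial σ K) := by
  rw [← map_ofNat MvPolynomial.C 2, ← map_neg]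
  exact (IsUnit.mk0 (-2 : K) (by norm_num)).map MvPolynomial.C

theorem stmt18_general (h : ℕ) (d : ℕ)
    (DPi DPi' : R2)
    (hDPi : (uu - vv) * DPi =
        (∏ l ∈ Finset.range h, ((l : R2) * vv + ((d - l : ℕ) : R2) * uu)) -
          swapUV (∏ l ∈ Finset.range h, ((l : R2) * vv + ((d - l : ℕ) : R2) * uu)))
    (hDPi' : (uu - vv) * DPi' =
        (uu + 3 * vv) * (∏ l ∈ Finset.range h, ((l : R2) * vv + ((d - l : ℕ) : R2) * uu)) -
          swapUV ((uu + 3 * vv) *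
            ∏ l ∈ Finset.range h, ((l : R2) * vv + ((d - l : ℕ) : R2) * uu))) :
    Ideal.span ({DPi, DPi'} : Set R2) =
      Ideal.span ({DPi,
        ∏ l ∈ Finset.range h, ((l : R2) * vv + ((d - l : ℕ) : R2) * uu)} : Set R2) := by
  rw [divDiff_mul divDiff_uu_add_three_mul_vv hDPi hDPi',
    Ideal.span_pair_mul_left_add_unit_mul MvPolynomial.isUnit_neg_two]

/-- Discussion 4.6 / Theorem 4.7: for `d = 2h`, `h > 2`, `Π = ∏_{l=0}^{h−1}(lv+(d−l)u)`,
the ideal `(∂Π, ∂((u+3v)Π))` equals the ideal `(∂Π, Π)`. -/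
theorem stmt18 (h : ℕ) (hh : 2 < h) (d : ℕ) (hd : d = 2 * h)
    (DPi DPi' : R2)
    (hDPi : (uu - vv) * DPi =
        (∏ l ∈ Finset.range h, ((l : R2) * vv + ((d - l : ℕ) : R2) * uu)) -
          swapUV (∏ l ∈ Finset.range h, ((l : R2) * vv + ((d - l : ℕ) : R2) * uu)))
    (hDPi' : (uu - vv) * DPi' =
        (uu + 3 * vv) * (∏ l ∈ Finset.range h, ((l : R2) * vv + ((d - l : ℕ) : R2) * uu)) -
          swapUV ((uu + 3 * vv) *
            ∏ l ∈ Finset.range h, ((l : R2) * vv + ((d - l : ℕ) : R2) * uu))) :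
    Ideal.span ({DPi, DPi'} : Set R2) =
      Ideal.span ({DPi,
        ∏ l ∈ Finset.range h, ((l : R2) * vv + ((d - l : ℕ) : R2) * uu)} : Set R2) :=
  stmt18_general h d DPi DPi' hDPi hDPi'
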